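/- arXiv:2206.14023 — 2 statements merged into one kernel-verified Lean document; each statement's English description precedes it below -/
import Mathlib

section
/- Let k ≥ 1 and let λ be a partition of m with λ_1 < k whose k-core has at most one part. Let q = ⌊m/k⌋ and let core_k(λ) = λ⁰ ⊂ λ¹ ⊂ ... ⊂ λ^q = λ be any sequence of partitions such that each λ^j/λ^{j-1} is a rim hook of size k. Then pet_k(λ) = Π_{j=1}^q (-1)^{ht(λ^j/λ^{j-1})+1}, with the empty product equal to 1 when λ = core_k(λ). -/
open scoped Classical

namespace Petrie

/-- An integer partition, encoded as a weakly decreasing, eventually zero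
function `ℕ → ℕ` (0-indexed parts: `parts i` is the `(i+1)`-st part). -/
structure Partition where
  parts : ℕ → ℕ
  antitone : ∀ ⦃i j : ℕ⦄, i ≤ j → parts j ≤ parts i
  fin_supp : ∃ N, ∀ i, N ≤ i → parts i = 0

/-- The size `|λ|` of a partition. -/
noncomputable def psize (l : Partition) : ℕ := ∑ᶠ i, l.parts i

/-- The number of (nonzero) parts of a partition. -/
noncomputable def length (l : Partition) : ℕ := sInf {i | l.parts i = 0}

/-- The partition whose parts are given by a weakly decreasing list `L`
(of its nonzero entries, possibly padded by zeros). -/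
noncomputable def ofList (L : List ℕ) : Partition where
  parts := fun i => (L.drop i).foldr max 0
  antitone := by
    have step : ∀ (M : List ℕ) (i : ℕ),
        (M.drop (i+1)).foldr max 0 ≤ (M.drop i).foldr max 0 := by
      intro M
      induction M with
      | nil => intro i; simp
      | cons a t ih =>
        intro i
        cases i with
        | zero =>
          simp only [List.drop_succ_cons, List.drop_zero, List.foldr_cons]; exact le_max_right a (t.foldr max 0)
        | succ n => simpa using ih n
    intro i j hij
    induction j, hij using Nat.le_induction with
    | base => exact le_rfl
    | succ n hn ih => exact (step L n).trans ih
  fin_supp := ⟨L.length, by intro i hi; simp [List.drop_eq_nil_of_le hi]⟩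

/-- The conjugate (transpose) partition. -/
noncomputable def conj (l : Partition) : Partition where
  parts := fun i => sInf {n | l.parts n ≤ i}
  antitone := by
    intro i j hij
    obtain ⟨N, hN⟩ := l.fin_supp
    refine csInf_le_csInf (OrderBot.bddBelow _) ⟨N, ?_⟩ ?_
    · simp [hN N le_rfl]
    · intro n hn
      exact le_trans hn hij
  fin_supp := by
    refine ⟨l.parts 0, fun i hi => ?_⟩
    exact Nat.sInf_eq_zero.mpr (Or.inl (le_trans (l.antitone (Nat.zero_le 0)) hi))

/-- The `k`-Petrie number `pet_k(λ) = det[χ(0 ≤ λ_i - i + j < k)]_{i,j=1}^{ℓ(λ)}`. -/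
noncomputable def pet (k : ℕ) (l : Partition) : ℤ :=
  Matrix.det (Matrix.of fun i j : Fin (length l) =>
    if (0:ℤ) ≤ (l.parts i : ℤ) - (i:ℕ) + (j:ℕ) ∧ (l.parts i : ℤ) - (i:ℕ) + (j:ℕ) < k
    then 1 else 0)

/-- The cells of the skew diagram `λ/μ` (rows and columns 0-indexed). -/
def cells (la mu : Partition) : Set (ℕ × ℕ) :=
  {c | mu.parts c.1 ≤ c.2 ∧ c.2 < la.parts c.1}

/-- Rookwise adjacency of two cells. -/
def Adj (c d : ℕ × ℕ) : Prop :=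
  (c.1 = d.1 ∧ (c.2 + 1 = d.2 ∨ d.2 + 1 = c.2)) ∨
  (c.2 = d.2 ∧ (c.1 + 1 = d.1 ∨ d.1 + 1 = c.1))

/-- `λ/μ` is a rim hook (border strip) of size `k`: `μ ⊆ λ`, the skew diagram
has `k` cells, is rookwise connected, and contains no 2×2 square. -/
def IsRimHook (la mu : Partition) (k : ℕ) : Prop :=
  (∀ i, mu.parts i ≤ la.parts i) ∧
  (∑ᶠ i, (la.parts i - mu.parts i)) = k ∧
  (∀ c ∈ cells la mu, ∀ d ∈ cells la mu,
    Relation.ReflTransGen (fun a b => a ∈ cells la mu ∧ b ∈ cells la mu ∧ Adj a b) c d) ∧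
  ¬ ∃ i j : ℕ, (i, j) ∈ cells la mu ∧ (i+1, j) ∈ cells la mu ∧
      (i, j+1) ∈ cells la mu ∧ (i+1, j+1) ∈ cells la mu

/-- The height of a skew shape `λ/μ`: one less than its number of rows. -/
noncomputable def height (la mu : Partition) : ℕ :=
  Set.ncard {i | mu.parts i < la.parts i} - 1

/-- The number of columns of the skew diagram `λ/μ`. -/
noncomputable def cols (la mu : Partition) : ℕ :=
  Set.ncard {j | ∃ i, (i, j) ∈ cells la mu}

/-- `c` is the `k`-core of `λ`: it is obtained from `λ` by successively removing
rim hooks of size `k`, and no further rim hook of size `k` can be removed. -/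
def IsCore (k : ℕ) (la c : Partition) : Prop :=
  Relation.ReflTransGen (fun a b => IsRimHook a b k) la c ∧ ∀ b, ¬ IsRimHook c b k

/-- Dominance order: `Dominates μ λ` means `λ ⊴ μ`. -/
def Dominates (mu la : Partition) : Prop :=
  ∀ r, ∑ i ∈ Finset.range r, la.parts i ≤ ∑ i ∈ Finset.range r, mu.parts i

/-! ### Symmetric functions, realized as formal power series in countably
many variables `x_0, x_1, x_2, …`. -/

/-- The ring of formal power series in the variables `x_i`, `i : ℕ`. -/
abbrev SymFn := MvPowerSeries ℕ ℤ

/-- The total degree of an exponent vector. -/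
noncomputable def degree (d : ℕ →₀ ℕ) : ℕ := d.sum fun _ e => e

/-- The complete homogeneous symmetric function `h_m`. -/
noncomputable def hfun (m : ℕ) : SymFn := fun d => if degree d = m then 1 else 0

/-- `h_n` for an integer index (`0` for negative `n`). -/
noncomputable def hz (n : ℤ) : SymFn := if 0 ≤ n then hfun n.toNat else 0

/-- The elementary symmetric function `e_m`. -/
noncomputable def esymmF (m : ℕ) : SymFn :=
  fun d => if degree d = m ∧ ∀ i, d i ≤ 1 then 1 else 0

/-- The power sum symmetric function `p_n = Σ_i x_i^n`. -/
noncomputable def psumF (n : ℕ) : SymFn :=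
  fun d => if ∃ i, d = Finsupp.single i n then 1 else 0

/-- The Petrie symmetric function `G(k,m)`, i.e. the degree-`m` part of
`Π_i (1 + x_i + x_i^2 + ⋯ + x_i^{k-1})`. -/
noncomputable def G (k m : ℕ) : SymFn :=
  fun d => if degree d = m ∧ ∀ i, d i < k then 1 else 0

/-- The monomial symmetric function `m_λ`. -/
noncomputable def msym (l : Partition) : SymFn :=
  fun d => if Multiset.map (fun i => d i) d.support.val =
      Multiset.map l.parts (Multiset.range (length l)) then 1 else 0

/-- The Schur function `s_λ`, via the Jacobi–Trudi determinant
`s_λ = det[h_{λ_i - i + j}]_{i,j=1}^{ℓ(λ)}`. -/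
noncomputable def schur (l : Partition) : SymFn :=
  Matrix.det (Matrix.of fun i j : Fin (length l) =>
    hz ((l.parts i : ℤ) - (i:ℕ) + (j:ℕ)))

/-- The representative in `{1, …, k}` of `x` modulo `k`. -/
noncomputable def resid (k : ℕ) (x : ℤ) : ℤ := if x % (k:ℤ) = 0 then (k:ℤ) else x % (k:ℤ)

/-- `β_i = λᶜ_i - i` (1-indexed `i`). -/
noncomputable def betaSeq (l : Partition) (i : ℕ) : ℤ := ((conj l).parts (i-1) : ℤ) - (i:ℤ)

/-- `γ_i ∈ {1, …, k}`, `γ_i ≡ λᶜ_i - i (mod k)` (1-indexed `i`). -/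
noncomputable def gammaSeq (k : ℕ) (l : Partition) (i : ℕ) : ℤ := resid k (betaSeq l i)

/-- The number of non-inversions of the sequence `γ_1, …, γ_{k-1}`. -/
noncomputable def ninv (k : ℕ) (g : ℕ → ℤ) : ℕ :=
  (((Finset.Icc 1 (k-1)) ×ˢ (Finset.Icc 1 (k-1))).filter
    (fun p => p.1 < p.2 ∧ g p.1 < g p.2)).card


/-!
With `β_i = λ_i - i`, the matrix defining `pet_k(λ)` has as its rows the indicators of the windows
`0 ≤ β_i + j < k`. Removing a `k`-rim hook that occupies rows `r, …, s` replaces `β_r` by `β_r - k`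
and moves it to position `s`: a cyclic permutation of `s - r = ht` rows, so it suffices that
lowering one `β_r = x` by `k` negates the determinant. The rows of `x` and of `x - k` add up to the
indicator of `0 ≤ x + j < 2k`, and in the matrix with this row columns `k - x - 1` and `k - x`
coincide, because no other `β_i` equals `x` or `x - k`. Along the chain the determinant thus picks
up the signs `(-1)^(ht + 1)`, and a core with at most one part, smaller than `k`, has `pet_k = 1`.
-/

theorem parts_eq_zero_of_length_le (l : Partition) {i : ℕ} (h : length l ≤ i) : l.parts i = 0 := by
  obtain ⟨N, hN⟩ := l.fin_supp
  have hlen : l.parts (length l) = 0 := Nat.sInf_mem (s := {i | l.parts i = 0}) ⟨N, hN N le_rfl⟩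
  exact Nat.eq_zero_of_le_zero (hlen ▸ l.antitone h)

theorem length_le_of_parts_eq_zero (l : Partition) {i : ℕ} (h : l.parts i = 0) : length l ≤ i :=
  Nat.sInf_le h

def beta (l : Partition) (i : ℕ) : ℤ := l.parts i - i

theorem beta_strictAnti (l : Partition) : StrictAnti (beta l) := fun i j hij => by
  have := l.antitone hij.le
  unfold beta
  omega

theorem update_comp_cycleIcc {α : Type*} {N : ℕ} [NeZero N] {y z : ℕ → α} {r s : Fin N}
    (hrs : r ≤ s) {v : α} (hout : ∀ i : ℕ, i < r ∨ s < i → z i = y i)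
    (hshift : ∀ i : ℕ, r ≤ i → i < s → z i = y (i + 1)) (hlast : z s = v) :
    Function.update (fun i : Fin N => y i) r v ∘ Fin.cycleIcc r s = fun i : Fin N => z i := by
  funext i
  have hupd : ∀ j, j ≠ r → Function.update (fun i : Fin N => y i) r v j = y j :=
    fun j h => Function.update_of_ne h _ _
  simp only [Function.comp_apply]
  rcases lt_or_ge i r with hi | hri
  · rw [Fin.cycleIcc_of_lt hi, hupd i hi.ne, hout i (Or.inl hi)]
  rcases lt_or_ge s i with hi | his
  · rw [Fin.cycleIcc_of_gt hi, hupd i (hrs.trans_lt hi).ne', hout i (Or.inr hi)]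
  rw [Fin.cycleIcc_of_le_of_le hri his]
  split_ifs with hi
  · rw [hi, Function.update_self, hlast]
  · have hlt : i < s := lt_of_le_of_ne his hi
    have hval : ((i + 1 : Fin N) : ℕ) = i + 1 := Fin.val_add_one_of_lt' (by omega)
    rw [hupd _ (fun h => by rw [Fin.ext_iff, hval] at h; omega), hval, hshift i hri hlt]

def windowRow (k : ℕ) {N : ℕ} (x : ℤ) : Fin N → ℤ :=
  fun j => if 0 ≤ x + (j : ℕ) ∧ x + (j : ℕ) < k then 1 else 0

def windowMatrix (k : ℕ) {N : ℕ} (y : Fin N → ℤ) : Matrix (Fin N) (Fin N) ℤ :=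
  Matrix.of fun i => windowRow k (y i)

theorem windowMatrix_update {k N : ℕ} (y : Fin N → ℤ) (r : Fin N) (x : ℤ) :
    windowMatrix k (Function.update y r x) = (windowMatrix k y).updateRow r (windowRow k x) := by
  ext i j
  rcases eq_or_ne i r with rfl | hi
  · simp [windowMatrix]
  · simp [windowMatrix, hi]

theorem det_windowMatrix_update_sub {k N : ℕ} (y : Fin N → ℤ) (r : Fin N)
    (hy : Function.Injective y) (hy' : Function.Injective (Function.update y r (y r - k)))
    (hlt : y r < k) (hcol : k - y r < N) :
    (windowMatrix k (Function.update y r (y r - k))).det = -(windowMatrix k y).det := by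
  set x := y r with hx
  let j₁ : Fin N := ⟨(k - x - 1).toNat, by omega⟩
  let j₂ : Fin N := ⟨(k - x).toNat, by omega⟩
  have hj₁ : ((j₁ : ℕ) : ℤ) = k - x - 1 := by simp [j₁]; omega
  have hj₂ : ((j₂ : ℕ) : ℤ) = k - x := by simp [j₂]; omega
  have hsum : ((windowMatrix k y).updateRow r (windowRow k x + windowRow k (x - k))).det = 0 := by
    refine Matrix.det_zero_of_column_eq (i := j₁) (j := j₂) (by simp [j₁, j₂]; omega) fun i => ?_
    rcases eq_or_ne i r with rfl | hi
    · simp only [Matrix.updateRow_self, Pi.add_apply, windowRow, hj₁, hj₂]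
      split_ifs <;> omega
    · have h₁ : y i ≠ x := hy.ne hi
      have h₂ : y i ≠ x - k := by simpa [hi] using hy'.ne hi
      simp only [Matrix.updateRow_ne hi, windowMatrix, Matrix.of_apply, windowRow, hj₁, hj₂]
      split_ifs <;> omega
  rw [Matrix.det_updateRow_add, ← windowMatrix_update, ← windowMatrix_update, hx,
    Function.update_eq_self] at hsum
  linarith

theorem det_windowMatrix_comp_perm {k N : ℕ} (y : Fin N → ℤ) (σ : Equiv.Perm (Fin N)) :
    (windowMatrix k (y ∘ σ)).det = Equiv.Perm.sign σ * (windowMatrix k y).det :=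
  (Matrix.det_permute σ (windowMatrix k y)).trans (by rw [Int.cast_id])

theorem det_windowMatrix_of_last_eq {k N : ℕ} (hk : 0 < k) (y : Fin (N + 1) → ℤ)
    (hy : y (Fin.last N) = -N) :
    (windowMatrix k y).det = (windowMatrix k (y ∘ Fin.castSucc)).det := by
  rw [Matrix.det_succ_row _ (Fin.last N), Finset.sum_eq_single (Fin.last N)]
  · simp [windowMatrix, windowRow, hy, hk, ← two_mul]
    rfl
  · intro j _ hj
    have : (j : ℕ) < N := Fin.val_lt_last hj
    simp [windowMatrix, windowRow, hy]
    omega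
  · simp

theorem det_windowMatrix_beta {k : ℕ} (hk : 0 < k) (l : Partition) {N : ℕ} (h : length l ≤ N) :
    (windowMatrix k fun i : Fin N => beta l i).det = pet k l := by
  induction N, h using Nat.le_induction with
  | base => rfl
  | succ N hN ih =>
    rw [det_windowMatrix_of_last_eq hk _ (by simp [beta, parts_eq_zero_of_length_le l hN])]
    exact ih

theorem pet_eq_one_of_length_le_one {k : ℕ} {c : Partition} (hlen : length c ≤ 1)
    (h0 : c.parts 0 < k) : pet k c = 1 := by
  rw [← det_windowMatrix_beta (by omega) c hlen, Matrix.det_fin_one]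
  simp [windowMatrix, windowRow, beta, h0]

theorem exists_vertical_step {S : Set (ℕ × ℕ)} {c d : ℕ × ℕ}
    (h : Relation.ReflTransGen (fun a b => a ∈ S ∧ b ∈ S ∧ Adj a b) c d) {i : ℕ}
    (hc : c.1 ≤ i) (hd : i < d.1) : ∃ j, (i, j) ∈ S ∧ (i + 1, j) ∈ S := by
  induction h with
  | refl => omega
  | @tail b e _ hbe ih =>
    obtain ⟨hb, he, hadj⟩ := hbe
    rcases lt_or_ge i b.1 with hib | hib
    · exact ih hib
    · obtain ⟨b₁, b₂⟩ := b
      obtain ⟨e₁, e₂⟩ := e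
      refine ⟨b₂, ?_⟩
      simp only [Adj] at hadj hib hd
      obtain rfl : i = b₁ := by omega
      obtain ⟨rfl, rfl⟩ : e₁ = i + 1 ∧ e₂ = b₂ := by omega
      exact ⟨hb, he⟩

namespace IsRimHook

variable {la mu : Partition} {k : ℕ}

theorem parts_succ_le (H : IsRimHook la mu k) (i : ℕ) : la.parts (i + 1) ≤ mu.parts i + 1 := by
  by_contra! h
  have := la.antitone (Nat.le_add_right i 1)
  have := mu.antitone (Nat.le_add_right i 1)
  refine H.2.2.2 ⟨i, mu.parts i, ?_, ?_, ?_, ?_⟩ <;> simp only [cells, Set.mem_ofPred_eq] <;> omega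

theorem lt_parts_succ (H : IsRimHook la mu k) {r s i : ℕ} (hr : mu.parts r < la.parts r)
    (hs : mu.parts s < la.parts s) (hri : r ≤ i) (his : i < s) : mu.parts i < la.parts (i + 1) := by
  obtain ⟨j, hj, hj'⟩ :=
    exists_vertical_step (H.2.2.1 (r, mu.parts r) ⟨le_rfl, hr⟩ (s, mu.parts s) ⟨le_rfl, hs⟩) hri his
  exact hj.1.trans_lt hj'.2

theorem exists_rows (hk : 0 < k) (H : IsRimHook la mu k) :
    ∃ r s, r ≤ s ∧ (∀ i, mu.parts i < la.parts i ↔ r ≤ i ∧ i ≤ s) ∧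
      ∀ i, r ≤ i → i < s → mu.parts i + 1 = la.parts (i + 1) := by
  set R := {i | mu.parts i < la.parts i}
  have hfin : R.Finite := (Set.finite_lt_nat (length la)).subset fun i hi => by
    by_contra h
    have := parts_eq_zero_of_length_le la (not_lt.mp h)
    simp only [R, Set.mem_ofPred_eq] at hi
    omega
  have hne : hfin.toFinset.Nonempty := by
    refine hfin.toFinset_nonempty.mpr ?_
    by_contra hR
    have hzero : ∀ i, la.parts i - mu.parts i = 0 := fun i => by
      have : i ∉ R := fun hi => hR ⟨i, hi⟩
      simp only [R, Set.mem_ofPred_eq] at this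
      omega
    have := H.2.1
    rw [finsum_eq_zero_of_forall_eq_zero hzero] at this
    omega
  set r := hfin.toFinset.min' hne
  set s := hfin.toFinset.max' hne
  have hr : r ∈ R := hfin.mem_toFinset.mp (Finset.min'_mem _ hne)
  have hs : s ∈ R := hfin.mem_toFinset.mp (Finset.max'_mem _ hne)
  have hshift : ∀ i, r ≤ i → i < s → mu.parts i + 1 = la.parts (i + 1) := fun i hri his =>
    le_antisymm (H.lt_parts_succ hr hs hri his) (H.parts_succ_le i)
  refine ⟨r, s, Finset.min'_le _ _ (hfin.mem_toFinset.mpr hs), fun i => ⟨?_, ?_⟩, hshift⟩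
  · intro hi
    exact ⟨Finset.min'_le _ _ (hfin.mem_toFinset.mpr hi), Finset.le_max' _ _ (hfin.mem_toFinset.mpr hi)⟩
  · rintro ⟨hri, his⟩
    rcases his.lt_or_eq with his | rfl
    · have := hshift i hri his
      have := la.antitone (Nat.le_add_right i 1)
      omega
    · exact hs

theorem beta_sub (H : IsRimHook la mu k) {r s : ℕ} (hrs : r ≤ s)
    (hrows : ∀ i, mu.parts i < la.parts i ↔ r ≤ i ∧ i ≤ s)
    (hshift : ∀ i, r ≤ i → i < s → mu.parts i + 1 = la.parts (i + 1)) :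
    beta mu s = beta la r - k := by
  have htel : ∀ t, r ≤ t → t ≤ s →
      ∑ i ∈ Finset.Icc r t, (beta la i - beta mu i) = beta la r - beta mu t := by
    intro t hrt hts
    induction t, hrt using Nat.le_induction with
    | base => simp
    | succ t hrt ih =>
      have := hshift t hrt (by omega)
      rw [Finset.sum_Icc_succ_top (by omega), ih (by omega)]
      simp only [beta]
      push_cast
      omega
  have hsupp : Function.support (fun i => la.parts i - mu.parts i) ⊆ Finset.Icc r s := by
    intro i hi
    rw [Function.mem_support] at hi
    simpa [← hrows] using Nat.lt_of_sub_ne_zero hi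
  have hsize : ∑ i ∈ Finset.Icc r s, (la.parts i - mu.parts i) = k :=
    (finsum_eq_sum_of_support_subset _ hsupp).symm.trans H.2.1
  have hsize' : ∑ i ∈ Finset.Icc r s, (beta la i - beta mu i) = k := by
    rw [← hsize, Nat.cast_sum]
    refine Finset.sum_congr rfl fun i _ => ?_
    simp only [beta, Nat.cast_sub (H.1 i)]
    ring
  linarith [htel s hrs le_rfl]

theorem exists_beta (hk : 0 < k) (H : IsRimHook la mu k) :
    ∃ r s, r ≤ s ∧ s < length la ∧ height la mu = s - r ∧
      (∀ i, i < r ∨ s < i → beta mu i = beta la i) ∧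
      (∀ i, r ≤ i → i < s → beta mu i = beta la (i + 1)) ∧ beta mu s = beta la r - k := by
  obtain ⟨r, s, hrs, hrows, hshift⟩ := H.exists_rows hk
  refine ⟨r, s, hrs, ?_, ?_, fun i hi => ?_, fun i hri his => ?_, H.beta_sub hrs hrows hshift⟩
  · by_contra h
    have := parts_eq_zero_of_length_le la (not_lt.mp h)
    have := (hrows s).2 ⟨hrs, le_rfl⟩
    omega
  · rw [height, show {i | mu.parts i < la.parts i} = Set.Icc r s from Set.ext hrows,
      Set.ncard_Icc_nat]
    omega
  · have := H.1 i
    have := (hrows i).not.2 (by omega)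
    simp only [beta]
    omega
  · have := hshift i hri his
    simp only [beta]
    push_cast
    omega

theorem pet_eq (hk : 0 < k) (H : IsRimHook la mu k) (h0 : la.parts 0 < k) :
    pet k la = (-1) ^ (height la mu + 1) * pet k mu := by
  obtain ⟨r, s, hrs, hsN, hheight, hout, hshift, hlast⟩ := H.exists_beta hk
  have hmu : length mu ≤ length la := length_le_of_parts_eq_zero mu <| by
    have := H.1 (length la)
    have := parts_eq_zero_of_length_le la le_rfl
    omega
  set N := length la
  have : NeZero N := ⟨by omega⟩
  let r' : Fin N := ⟨r, by omega⟩
  let s' : Fin N := ⟨s, hsN⟩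
  set y : Fin N → ℤ := fun i => beta la i
  set y' := Function.update y r' (y r' - k)
  have hz : y' ∘ Fin.cycleIcc r' s' = fun i : Fin N => beta mu i :=
    update_comp_cycleIcc (show r' ≤ s' from hrs) hout hshift hlast
  have hy : Function.Injective y := (beta_strictAnti la).injective.comp Fin.val_injective
  have hy' : Function.Injective y' := by
    rw [← Function.comp_id y', ← (Fin.cycleIcc r' s').self_comp_symm, ← Function.comp_assoc, hz]
    exact ((beta_strictAnti mu).injective.comp Fin.val_injective).comp (Equiv.injective _)
  have hsq : ((-1 : ℤ) ^ (s - r)) ^ 2 = 1 := by rw [← pow_mul, pow_mul']; norm_num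
  calc pet k la = (windowMatrix k y).det := rfl
    _ = -(windowMatrix k y').det :=
      neg_eq_iff_eq_neg.mp (det_windowMatrix_update_sub y r' hy hy' ?_ ?_).symm
    _ = (-1) ^ (height la mu + 1) * pet k mu := by
      rw [← det_windowMatrix_beta hk mu hmu, ← hz, det_windowMatrix_comp_perm,
        Fin.sign_cycleIcc_of_le (show r' ≤ s' from hrs), hheight]
      push_cast
      linear_combination (windowMatrix k y').det * hsq
  · have := la.antitone (Nat.zero_le r)
    simp only [y, r', beta]
    omega
  · simp only [y, r', beta] at hlast ⊢
    omega

end IsRimHook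

theorem parts_le_of_chain {k q : ℕ} {f : ℕ → Partition}
    (hstep : ∀ j < q, IsRimHook (f (j + 1)) (f j) k) {j : ℕ} (hj : j ≤ q) (i : ℕ) :
    (f j).parts i ≤ (f q).parts i := by
  induction q with
  | zero =>
    obtain rfl : j = 0 := by omega
    rfl
  | succ q ih =>
    rcases hj.lt_or_eq with hj | rfl
    · exact (ih (fun j hj => hstep j (by omega)) (by omega)).trans ((hstep q (by omega)).1 i)
    · rfl

theorem pet_eq_prod_mul_pet_of_chain {k : ℕ} (hk : 0 < k) {f : ℕ → Partition} :
    ∀ {q : ℕ}, (∀ j < q, IsRimHook (f (j + 1)) (f j) k) → (f q).parts 0 < k →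
      pet k (f q) = (∏ j ∈ Finset.range q, (-1 : ℤ) ^ (height (f (j + 1)) (f j) + 1)) * pet k (f 0)
  | 0, _, _ => by simp
  | q + 1, hstep, hq => by
    rw [(hstep q (by omega)).pet_eq hk hq, Finset.prod_range_succ,
      pet_eq_prod_mul_pet_of_chain hk (fun i hi => hstep i (by omega))
        (((hstep q (by omega)).1 0).trans_lt hq)]
    ring

theorem pet_eq_prod_heights_general (k m : ℕ) (hk : 1 ≤ k) (l : Partition)
    (h1 : l.parts 0 < k)
    (c : Partition) (hlen : length c ≤ 1)
    (f : ℕ → Partition) (hf0 : f 0 = c) (hfq : f (m / k) = l)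
    (hstep : ∀ j, j < m / k → IsRimHook (f (j+1)) (f j) k) :
    pet k l = ∏ j ∈ Finset.range (m / k), (-1 : ℤ) ^ (height (f (j+1)) (f j) + 1) := by
  have hq : (f (m / k)).parts 0 < k := hfq ▸ h1
  have hc : c.parts 0 < k := hf0 ▸ (parts_le_of_chain hstep (Nat.zero_le _) 0).trans_lt hq
  rw [← hfq, pet_eq_prod_mul_pet_of_chain hk hstep hq, hf0, pet_eq_one_of_length_le_one hlen hc,
    mul_one]

/-- if `λ ⊢ m`, `λ_1 < k`, the `k`-core of `λ` has at most one
part, and `core_k(λ) = λ⁰ ⊂ λ¹ ⊂ ⋯ ⊂ λ^q = λ` (`q = ⌊m/k⌋`) is any chain in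
which each `λ^j/λ^{j-1}` is a rim hook of size `k`, then
`pet_k(λ) = Π_{j=1}^q (-1)^{ht(λ^j/λ^{j-1})+1}`. -/
theorem pet_eq_prod_heights (k m : ℕ) (hk : 1 ≤ k) (l : Partition)
    (hm : psize l = m) (h1 : l.parts 0 < k)
    (c : Partition) (hc : IsCore k l c) (hlen : length c ≤ 1)
    (f : ℕ → Partition) (hf0 : f 0 = c) (hfq : f (m / k) = l)
    (hstep : ∀ j, j < m / k → IsRimHook (f (j+1)) (f j) k) :
    pet k l = ∏ j ∈ Finset.range (m / k), (-1 : ℤ) ^ (height (f (j+1)) (f j) + 1) :=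
  pet_eq_prod_heights_general k m hk l h1 c hlen f hf0 hfq hstep

end Petrie
end

section
/- Let k ≥ 2 and let λ, μ be partitions with μ ⊂ λ, λ_1 < k, λ/μ a rim hook of size k, and suppose the residues γ_i ≡ λᶜ_i - i (mod k) taken in {1,...,k} are pairwise distinct for i = 1,...,k-1. Then ninv(γ(λᶜ)) + ninv(γ(μᶜ)) ≡ k + ht(λ/μ) + 1 (mod 2), where ninv counts pairs i < j with γ_i < γ_j. -/
open scoped Classical

namespace Petrie

/-!
A rim hook `λ/μ` of size `k` occupies a block of rows `a, …, b` in which consecutive rows share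
exactly one column, i.e. `λ_{i+1} = μ_i + 1`; telescoping gives `λ_a + b = k + μ_b + a`.
Comparing conjugates column by column, `γ(μᶜ)` is `γ(λᶜ)` with the positions
`μ_b + 1, …, λ_a` rotated cyclically (at the wrap-around `β` changes by exactly `k`).
This cycle is a product of `λ_a - μ_b - 1 = k - 1 - ht(λ/μ)` adjacent transpositions, and each
of them changes the number of non-inversions of an injective sequence by `±1`.
-/

lemma resid_add_self (k : ℕ) (x : ℤ) : resid k (x + k) = resid k x := by
  simp only [resid, Int.add_emod_right]

lemma ninv_congr {k : ℕ} {g g' : ℕ → ℤ} (h : ∀ i ∈ Finset.Icc 1 (k-1), g i = g' i) :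
    ninv k g = ninv k g' := by
  unfold ninv
  congr 1
  refine Finset.filter_congr fun p hp => ?_
  rw [Finset.mem_product] at hp
  rw [h _ hp.1, h _ hp.2]

lemma ninv_comp_swap_add_ninv {k t : ℕ} {g : ℕ → ℤ} (ht : 1 ≤ t) (ht' : t + 1 ≤ k - 1)
    (hne : g t ≠ g (t + 1)) :
    (ninv k (g ∘ Equiv.swap t (t + 1)) + ninv k g) % 2 = 1 := by
  set σ := Equiv.swap t (t + 1)
  set Q := (Finset.Icc 1 (k-1) ×ˢ Finset.Icc 1 (k-1)).filter fun p : ℕ × ℕ => p.1 < p.2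
  have htQ : (t, t + 1) ∈ Q := by
    simp only [Q, Finset.mem_filter, Finset.mem_product, Finset.mem_Icc]; omega
  have hσQ : ∀ p ∈ Q.erase (t, t + 1), (σ p.1, σ p.2) ∈ Q.erase (t, t + 1) := by
    rintro ⟨i, j⟩ hp
    simp only [Q, σ, Finset.mem_erase, Finset.mem_filter, Finset.mem_product, Finset.mem_Icc,
      ne_eq, Prod.ext_iff, Equiv.swap_apply_def] at hp ⊢
    split_ifs <;> omega
  have hsplit : ∀ h : ℕ → ℤ, ninv k h =
      (∑ p ∈ Q.erase (t, t + 1), if h p.1 < h p.2 then 1 else 0) +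
        if h t < h (t + 1) then 1 else 0 := by
    intro h
    rw [Finset.sum_erase_add _ _ htQ, ← Finset.card_filter, Finset.filter_filter]
    rfl
  have hbij : (∑ p ∈ Q.erase (t, t + 1), if g (σ p.1) < g (σ p.2) then 1 else 0) =
      ∑ p ∈ Q.erase (t, t + 1), if g p.1 < g p.2 then 1 else 0 :=
    Finset.sum_nbij' (fun p => (σ p.1, σ p.2)) (fun p => (σ p.1, σ p.2)) hσQ hσQ
      (fun p _ => by simp [σ]) (fun p _ => by simp [σ]) (fun p _ => rfl)
  rw [hsplit, hsplit g]
  simp only [Function.comp_apply, σ, Equiv.swap_apply_left, Equiv.swap_apply_right] at hbij ⊢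
  rw [hbij]
  rcases hne.lt_or_gt with h | h
  · rw [if_neg h.not_gt, if_pos h]; omega
  · rw [if_pos h, if_neg h.not_gt]; omega

/-- The cyclic permutation `(p p+1 … p+d)` of `ℕ`. -/
def cycleIcc (p d j : ℕ) : ℕ :=
  if p ≤ j ∧ j < p + d then j + 1 else if j = p + d then p else j

lemma cycleIcc_zero (p : ℕ) : cycleIcc p 0 = id := by
  funext j
  simp only [cycleIcc, id]
  split_ifs <;> omega

lemma cycleIcc_succ (p d : ℕ) :
    cycleIcc p (d + 1) = Equiv.swap p (p + 1) ∘ cycleIcc (p + 1) d := by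
  funext j
  simp only [cycleIcc, Function.comp_apply, Equiv.swap_apply_def]
  split_ifs <;> omega

lemma ninv_comp_cycleIcc_add_ninv {k p d : ℕ} {g : ℕ → ℤ}
    (hg : Set.InjOn g (Finset.Icc 1 (k-1))) (hp : 1 ≤ p) (hd : p + d ≤ k - 1) :
    (ninv k (g ∘ cycleIcc p d) + ninv k g) % 2 = d % 2 := by
  induction d generalizing p g with
  | zero => rw [cycleIcc_zero, Function.comp_id]; omega
  | succ d ih =>
    have hmem : ∀ i, 1 ≤ i → i ≤ k - 1 → i ∈ (Finset.Icc 1 (k-1) : Set ℕ) := fun i h1 h2 => by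
      simp [h1, h2]
    have hne : g p ≠ g (p + 1) := fun h => by
      have := hg (hmem p hp (by omega)) (hmem (p+1) (by omega) (by omega)) h
      omega
    have hσ : Set.MapsTo (Equiv.swap p (p + 1)) (Finset.Icc 1 (k-1) : Set ℕ)
        (Finset.Icc 1 (k-1)) := by
      intro i hi
      simp only [Finset.coe_Icc, Set.mem_Icc, Equiv.swap_apply_def] at hi ⊢
      split_ifs <;> omega
    have hcycle := ih (p := p + 1) (hg.comp (Equiv.injective _).injOn hσ) (by omega) (by omega)
    have hswap := ninv_comp_swap_add_ninv (k := k) hp (by omega) hne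
    rw [cycleIcc_succ, ← Function.comp_assoc]
    omega

lemma conj_parts_le_iff (l : Partition) (c N : ℕ) : (conj l).parts c ≤ N ↔ l.parts N ≤ c := by
  have hne : {n | l.parts n ≤ c}.Nonempty := by
    obtain ⟨M, hM⟩ := l.fin_supp
    exact ⟨M, by simp [hM M le_rfl]⟩
  refine ⟨fun h => (l.antitone h).trans (Nat.sInf_mem hne), fun h => Nat.sInf_le h⟩

structure IsRibbonOn (la mu : Partition) (a b : ℕ) : Prop where
  le : a ≤ b
  parts_le : ∀ i, mu.parts i ≤ la.parts i
  lt_iff : ∀ i, mu.parts i < la.parts i ↔ a ≤ i ∧ i ≤ b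
  parts_succ : ∀ i, a ≤ i → i < b → la.parts (i + 1) = mu.parts i + 1

lemma exists_cells_of_reflTransGen {la mu : Partition} {c d : ℕ × ℕ}
    (h : Relation.ReflTransGen (fun x y => x ∈ cells la mu ∧ y ∈ cells la mu ∧ Adj x y) c d)
    {i : ℕ} (hc : c.1 ≤ i) (hd : i < d.1) :
    ∃ j, (i, j) ∈ cells la mu ∧ (i + 1, j) ∈ cells la mu := by
  induction h with
  | refl => omega
  | @tail e f _ hef ih =>
    by_cases hlt : i < e.1
    · exact ih hlt
    obtain ⟨he, hf, hadj⟩ := hef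
    obtain ⟨e1, e2⟩ := e
    obtain ⟨f1, f2⟩ := f
    simp only [Adj] at hadj hd hlt
    obtain ⟨rfl, rfl⟩ : e1 = i ∧ f1 = i + 1 := by omega
    obtain rfl : e2 = f2 := by omega
    exact ⟨e2, he, hf⟩

lemma parts_succ_eq_of_cells {la mu : Partition} {i j : ℕ}
    (hsq : ¬ ∃ i j : ℕ, (i, j) ∈ cells la mu ∧ (i+1, j) ∈ cells la mu ∧
      (i, j+1) ∈ cells la mu ∧ (i+1, j+1) ∈ cells la mu)
    (hi : (i, j) ∈ cells la mu) (hi' : (i + 1, j) ∈ cells la mu) :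
    la.parts (i + 1) = mu.parts i + 1 := by
  simp only [cells, Set.mem_ofPred_eq] at hi hi'
  have hla := la.antitone (Nat.le_add_right i 1)
  have hmu := mu.antitone (Nat.le_add_right i 1)
  by_contra hne
  exact hsq ⟨i, mu.parts i, by simp only [cells, Set.mem_ofPred_eq]; omega⟩

lemma IsRimHook.exists_isRibbonOn {la mu : Partition} {k : ℕ} (h : IsRimHook la mu k)
    (hk : 0 < k) : ∃ a b, IsRibbonOn la mu a b := by
  obtain ⟨hle, hsize, hconn, hsq⟩ := h
  set R := {i | mu.parts i < la.parts i}
  have hR : R.Nonempty := by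
    by_contra hR
    simp only [R, Set.not_nonempty_iff_eq_empty, Set.eq_empty_iff_forall_notMem,
      Set.mem_ofPred_eq, not_lt] at hR
    simp [Nat.sub_eq_zero_of_le (hR _)] at hsize
    omega
  have hRbdd : BddAbove R := by
    obtain ⟨N, hN⟩ := la.fin_supp
    refine ⟨N, fun i hi => ?_⟩
    by_contra hiN
    have := hN i (by omega)
    simp only [R, Set.mem_ofPred_eq] at hi
    omega
  have ha : sInf R ∈ R := Nat.sInf_mem hR
  have hb : sSup R ∈ R := Nat.sSup_mem hR hRbdd
  have hcontact : ∀ i, sInf R ≤ i → i < sSup R →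
      ∃ j, (i, j) ∈ cells la mu ∧ (i + 1, j) ∈ cells la mu := fun i h1 h2 =>
    exists_cells_of_reflTransGen (hconn (sInf R, mu.parts (sInf R)) ⟨le_rfl, ha⟩
      (sSup R, mu.parts (sSup R)) ⟨le_rfl, hb⟩) h1 h2
  refine ⟨sInf R, sSup R, Nat.sInf_le hb, hle, fun i => ⟨fun hi => ⟨Nat.sInf_le hi,
    le_csSup hRbdd hi⟩, fun ⟨h1, h2⟩ => ?_⟩, fun i h1 h2 => ?_⟩
  · rcases h2.lt_or_eq with h2 | rfl
    · obtain ⟨j, ⟨hj, hj'⟩, -⟩ := hcontact i h1 h2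
      exact hj.trans_lt hj'
    · exact hb
  · obtain ⟨j, hj, hj'⟩ := hcontact i h1 h2
    exact parts_succ_eq_of_cells hsq hj hj'

namespace IsRibbonOn

variable {la mu : Partition} {a b : ℕ}

lemma parts_eq (h : IsRibbonOn la mu a b) {i : ℕ} (hi : i < a ∨ b < i) :
    la.parts i = mu.parts i := by
  have := h.parts_le i
  have := h.lt_iff i
  omega

lemma finsum_sub_add (h : IsRibbonOn la mu a b) :
    (∑ᶠ i, (la.parts i - mu.parts i)) + mu.parts b + a = la.parts a + b := by
  have hsupp : Function.support (fun i => la.parts i - mu.parts i) ⊆ Finset.Icc a b := by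
    intro i hi
    have := h.lt_iff i
    simp only [Function.mem_support, Finset.coe_Icc, Set.mem_Icc] at hi ⊢
    omega
  have htel : ∀ t, a + t ≤ b →
      (∑ i ∈ Finset.Icc a (a + t), (la.parts i - mu.parts i)) + mu.parts (a + t)
        = la.parts a + t := by
    intro t
    induction t with
    | zero => intro; simp [Nat.sub_add_cancel (h.parts_le a)]
    | succ t ih =>
      intro ht
      rw [← add_assoc, Finset.sum_Icc_succ_top (by omega)]
      have := ih (by omega)
      have := h.parts_succ (a + t) (by omega) (by omega)
      have := (h.lt_iff (a + t + 1)).2 ⟨by omega, by omega⟩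
      omega
  have hab := h.le
  have := htel (b - a) (by omega)
  rw [Nat.add_sub_cancel' hab] at this
  rw [finsum_eq_sum_of_support_subset _ hsupp]
  omega

lemma height_eq (h : IsRibbonOn la mu a b) : height la mu = b - a := by
  have hrows : {i | mu.parts i < la.parts i} = Finset.Icc a b := by
    ext i
    simp [h.lt_iff]
  rw [height, hrows, Set.ncard_coe_finset, Nat.card_Icc]
  omega

lemma conj_parts_eq (h : IsRibbonOn la mu a b) {c : ℕ}
    (hc : c < mu.parts b ∨ la.parts a ≤ c) : (conj mu).parts c = (conj la).parts c := by
  refine eq_of_forall_ge_iff fun N => ?_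
  rw [conj_parts_le_iff, conj_parts_le_iff]
  have := h.parts_le N
  rcases lt_or_ge N a with hNa | hNa
  · rw [h.parts_eq (Or.inl hNa)]
  rcases le_or_gt N b with hNb | hNb
  · have := mu.antitone hNb
    have := la.antitone hNa
    omega
  · rw [h.parts_eq (Or.inr hNb)]

lemma conj_parts_succ (h : IsRibbonOn la mu a b) {c : ℕ} (hb : mu.parts b ≤ c)
    (ha : c + 1 < la.parts a) : (conj la).parts (c + 1) = (conj mu).parts c + 1 := by
  refine eq_of_forall_ge_iff fun N => ?_
  rcases N with _ | n
  · have := la.antitone (Nat.zero_le a)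
    rw [conj_parts_le_iff]
    omega
  rw [conj_parts_le_iff, Nat.add_le_add_iff_right, conj_parts_le_iff]
  rcases lt_or_ge n a with hna | hna
  · have := la.antitone (show n + 1 ≤ a by omega)
    have := la.antitone hna.le
    rw [← h.parts_eq (Or.inl hna)]
    omega
  rcases lt_or_ge n b with hnb | hnb
  · rw [h.parts_succ n hna hnb]
    omega
  · have := mu.antitone hnb
    have := mu.antitone (show b ≤ n + 1 by omega)
    rw [h.parts_eq (Or.inr (show b < n + 1 by omega))]
    omega

lemma conj_parts_mu_top (h : IsRibbonOn la mu a b) : (conj mu).parts (la.parts a - 1) = a := by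
  refine eq_of_forall_ge_iff fun N => ?_
  have := (h.lt_iff a).2 ⟨le_rfl, h.le⟩
  rw [conj_parts_le_iff]
  rcases lt_or_ge N a with hNa | hNa
  · have := la.antitone hNa.le
    rw [← h.parts_eq (Or.inl hNa)]
    omega
  · have := mu.antitone hNa
    omega

lemma conj_parts_la_bot (h : IsRibbonOn la mu a b) : (conj la).parts (mu.parts b) = b + 1 := by
  refine eq_of_forall_ge_iff fun N => ?_
  have := (h.lt_iff b).2 ⟨h.le, le_rfl⟩
  rw [conj_parts_le_iff]
  rcases le_or_gt N b with hNb | hNb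
  · have := la.antitone hNb
    omega
  · have := mu.antitone hNb.le
    rw [h.parts_eq (Or.inr hNb)]
    omega

lemma gammaSeq_eq {k : ℕ} (h : IsRibbonOn la mu a b)
    (hk : (∑ᶠ i, (la.parts i - mu.parts i)) = k) {j : ℕ} (hj : 1 ≤ j) :
    gammaSeq k mu j =
      gammaSeq k la (cycleIcc (mu.parts b + 1) (la.parts a - mu.parts b - 1) j) := by
  have hsize := h.finsum_sub_add
  have hb := (h.lt_iff b).2 ⟨h.le, le_rfl⟩
  have hab := la.antitone h.le
  obtain ⟨c, rfl⟩ : ∃ c, j = c + 1 := ⟨j - 1, by omega⟩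
  unfold gammaSeq betaSeq cycleIcc
  split_ifs with hin hend
  · rw [Nat.add_sub_cancel, Nat.add_sub_cancel, h.conj_parts_succ (by omega) (by omega)]
    push_cast
    ring_nf
  · rw [Nat.add_sub_cancel, Nat.add_sub_cancel, h.conj_parts_la_bot,
      show c = la.parts a - 1 by omega, h.conj_parts_mu_top, ← resid_add_self k]
    congr 1
    push_cast
    omega
  · rw [Nat.add_sub_cancel, h.conj_parts_eq (by omega)]

end IsRibbonOn

theorem ninv_parity_after_rim_hook_removal_general (k : ℕ) (la mu : Partition)
    (h1 : la.parts 0 < k) (hrh : IsRimHook la mu k)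
    (hdist : ∀ i ∈ Finset.Icc 1 (k-1), ∀ j ∈ Finset.Icc 1 (k-1),
        gammaSeq k la i = gammaSeq k la j → i = j) :
    (ninv k (gammaSeq k la) + ninv k (gammaSeq k mu)) % 2
      = (k + height la mu + 1) % 2 := by
  obtain ⟨a, b, hr⟩ := hrh.exists_isRibbonOn (by omega)
  have hsize := hr.finsum_sub_add
  rw [hrh.2.1] at hsize
  have hb := (hr.lt_iff b).2 ⟨hr.le, le_rfl⟩
  have hab := la.antitone hr.le
  have ha := la.antitone (Nat.zero_le a)
  have hrot : ninv k (gammaSeq k mu) = ninv k (gammaSeq k la ∘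
      cycleIcc (mu.parts b + 1) (la.parts a - mu.parts b - 1)) :=
    ninv_congr fun j hj => hr.gammaSeq_eq hrh.2.1 (Finset.mem_Icc.1 hj).1
  have hcycle := ninv_comp_cycleIcc_add_ninv (fun i hi j hj => hdist i hi j hj)
    (show 1 ≤ mu.parts b + 1 by omega)
    (show mu.parts b + 1 + (la.parts a - mu.parts b - 1) ≤ k - 1 by omega)
  rw [hrot, hr.height_eq]
  omega

/-- if `λ/μ` is a rim hook of size `k`, `λ_1 < k`, and the `γ`
residues of `λ` are pairwise distinct, then
`ninv(γ(λᶜ)) + ninv(γ(μᶜ)) ≡ k + ht(λ/μ) + 1 (mod 2)`. -/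
theorem ninv_parity_after_rim_hook_removal (k : ℕ) (hk : 2 ≤ k) (la mu : Partition)
    (h1 : la.parts 0 < k) (hrh : IsRimHook la mu k)
    (hdist : ∀ i ∈ Finset.Icc 1 (k-1), ∀ j ∈ Finset.Icc 1 (k-1),
        gammaSeq k la i = gammaSeq k la j → i = j) :
    (ninv k (gammaSeq k la) + ninv k (gammaSeq k mu)) % 2
      = (k + height la mu + 1) % 2 :=
  ninv_parity_after_rim_hook_removal_general k la mu h1 hrh hdist

end Petrie
end
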